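/- arXiv:2310.02604 — 4 statements merged into one kernel-verified Lean document; each statement's English description precedes it below -/
import Mathlib

section
/- Let A_1, ..., A_T ∈ ℝ^{n×m}, let σ = max{σ' : σ' is a singular value of some A_i} with σ > 0, and suppose the EG step sizes satisfy α = γ < 1/σ. Let Ã = M_EG(A_T)·M_EG(A_{T−1})···M_EG(A_1). Then: (i) ‖M_EG(A_i)‖₂ ≤ 1 for every i ∈ {1,...,T}; (ii) ker(Ã − I) = ∩_{i=1}^T ker(M_EG(A_i) − I); and (iii) every (complex) eigenvalue of Ã other than 1 has modulus strictly less than 1, i.e., λ* = max{|λ| : λ eigenvalue of Ã, λ ≠ 1} satisfies λ* < 1. -/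
open Matrix

/-- Spectral (operator 2-)norm of a real matrix; this is also its largest singular value. -/
noncomputable def mnorm2 {ι κ : Type*} [Fintype ι] [Fintype κ] [DecidableEq κ]
    (M : Matrix ι κ ℝ) : ℝ :=
  ‖LinearMap.toContinuousLinearMap (Matrix.toEuclideanLin M)‖

/-- The extra-gradient (EG) iterative matrix
`M_EG(A) = [[I − αγ A Aᵀ, −α A], [α Aᵀ, I − αγ Aᵀ A]]`. -/
noncomputable def MEG {n m : ℕ} (α γ : ℝ) (A : Matrix (Fin n) (Fin m) ℝ) :
    Matrix (Fin n ⊕ Fin m) (Fin n ⊕ Fin m) ℝ :=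
  fromBlocks (1 - (α * γ) • (A * Aᵀ)) ((-α) • A) (α • Aᵀ) (1 - (α * γ) • (Aᵀ * A))

/-- `μ : ℂ` is an eigenvalue of the real matrix `M`. -/
def IsEig {d : Type*} [Fintype d] (M : Matrix d d ℝ) (μ : ℂ) : Prop :=
  ∃ v : d → ℂ, v ≠ 0 ∧ (M.map (fun x : ℝ => (x : ℂ))).mulVec v = μ • v

/-- `λ* = max{|λ| : λ eigenvalue of M, λ ≠ 1}`. -/
noncomputable def lamStar {d : Type*} [Fintype d] (M : Matrix d d ℝ) : ℝ :=
  sSup {r : ℝ | ∃ μ : ℂ, IsEig M μ ∧ μ ≠ 1 ∧ r = ‖μ‖}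

/-- `periodProd α γ A k = M_EG(A_{k-1}) ⋯ M_EG(A_1) M_EG(A_0)`. -/
noncomputable def periodProd {n m : ℕ} (α γ : ℝ) (A : ℕ → Matrix (Fin n) (Fin m) ℝ) :
    ℕ → Matrix (Fin n ⊕ Fin m) (Fin n ⊕ Fin m) ℝ
  | 0 => 1
  | k + 1 => MEG α γ (A k) * periodProd α γ A k

/-!
For `α = γ` we have `M_EG(A) = I + αB + α²B²` with `B = [[0, -A], [Aᵀ, 0]]` skew-symmetric, so
`‖M v‖² = ‖v‖² - α²‖Bv‖² + α⁴‖B²v‖²`, and `‖B‖ ≤ ‖A‖` bounds this by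
`‖v‖² - α²(1 - α²‖A‖²)‖Bv‖²`. Hence, when `α‖A‖ < 1`, `M_EG(A)` is a paracontraction:
`‖M v‖ < ‖v‖` unless `M v = v`. Paracontractions are closed under composition, and a composition
fixes exactly the common fixed points of its factors; this gives (i) and (ii). For (iii), if `μ`
is an eigenvalue of a real paracontraction `P` with `|μ| ≥ 1` and `x`, `y` are the real and
imaginary parts of an eigenvector, then `‖Px‖² + ‖Py‖² = |μ|² (‖x‖² + ‖y‖²) ≥ ‖x‖² + ‖y‖²`,
which forces `Px = x` and `Py = y`, hence `μ = 1`.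
-/

open scoped Matrix.Norms.L2Operator RealInnerProductSpace
open WithLp

def IsParacontraction {E : Type*} [Norm E] (f : E → E) : Prop :=
  ∀ x, f x ≠ x → ‖f x‖ < ‖x‖

namespace IsParacontraction

variable {E : Type*} [Norm E] {f g : E → E}

theorem norm_le (hf : IsParacontraction f) (x : E) : ‖f x‖ ≤ ‖x‖ := by
  by_cases hx : f x = x
  · rw [hx]
  · exact (hf x hx).le

theorem comp (hf : IsParacontraction f) (hg : IsParacontraction g) :
    IsParacontraction (f ∘ g) := by
  intro x hx
  by_cases hgx : g x = x
  · simp only [Function.comp_apply, hgx] at hx ⊢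
    exact hf x hx
  · exact (hf.norm_le (g x)).trans_lt (hg x hgx)

theorem comp_apply_eq_self_iff (hf : IsParacontraction f) (hg : IsParacontraction g) {x : E} :
    f (g x) = x ↔ f x = x ∧ g x = x := by
  refine ⟨fun hfg => ?_, fun ⟨hfx, hgx⟩ => by rw [hgx, hfx]⟩
  have hgx : g x = x := by
    by_contra hgx
    exact (hfg ▸ hf.norm_le (g x)).not_gt (hg x hgx)
  rw [hgx] at hfg
  exact ⟨hfg, hgx⟩

end IsParacontraction

theorem IsParacontraction.apply_eq_self_of_norm_sq_add_le {E : Type*} [SeminormedAddGroup E]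
    {f : E → E} (hf : IsParacontraction f) {x y : E}
    (h : ‖x‖ ^ 2 + ‖y‖ ^ 2 ≤ ‖f x‖ ^ 2 + ‖f y‖ ^ 2) : f x = x ∧ f y = y := by
  have hx := hf.norm_le x
  have hy := hf.norm_le y
  constructor <;> by_contra hne
  · have := hf x hne
    nlinarith [norm_nonneg (f x), norm_nonneg (f y)]
  · have := hf y hne
    nlinarith [norm_nonneg (f x), norm_nonneg (f y)]

section SkewOperator

variable {E : Type*} [NormedAddCommGroup E] [InnerProductSpace ℝ E] {N : E →L[ℝ] E}

theorem norm_sq_add_smul_add_sq_smul_of_skew (hN : ∀ x y, ⟪N x, y⟫ = -⟪x, N y⟫) (a : ℝ)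
    (v : E) :
    ‖v + a • N v + a ^ 2 • N (N v)‖ ^ 2 =
      ‖v‖ ^ 2 - a ^ 2 * ‖N v‖ ^ 2 + a ^ 4 * ‖N (N v)‖ ^ 2 := by
  have h₁ : ⟪v, N v⟫ = 0 := by linarith [hN v v, real_inner_comm v (N v)]
  have h₂ : ⟪N v, N (N v)⟫ = 0 := by linarith [hN (N v) (N v), real_inner_comm (N v) (N (N v))]
  have h₃ : ⟪v, N (N v)⟫ = -‖N v‖ ^ 2 := by
    rw [← real_inner_self_eq_norm_sq]
    linarith [hN v (N v)]
  simp only [norm_add_sq_real, inner_add_left, real_inner_smul_left, real_inner_smul_right,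
    norm_smul, h₁, h₂, h₃, Real.norm_eq_abs, mul_pow, abs_pow, sq_abs]
  ring

theorem isParacontraction_one_add_smul_add_sq_smul_of_skew
    (hN : ∀ x y, ⟪N x, y⟫ = -⟪x, N y⟫) {a : ℝ} (ha : |a| * ‖N‖ < 1) :
    IsParacontraction ⇑(1 + a • N + a ^ 2 • (N * N)) := by
  intro v hv
  have happly : (1 + a • N + a ^ 2 • (N * N)) v = v + a • N v + a ^ 2 • N (N v) := rfl
  have hpos : 0 < a ^ 2 * ‖N v‖ ^ 2 := by
    refine lt_of_le_of_ne (by positivity) (fun h => hv ?_)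
    rcases mul_eq_zero.mp h.symm with h | h
    · rw [pow_eq_zero_iff two_ne_zero] at h
      simp [h]
    · rw [pow_eq_zero_iff two_ne_zero, norm_eq_zero] at h
      simp [h]
  have hsq : a ^ 2 * ‖N‖ ^ 2 < 1 := by
    have := mul_nonneg (abs_nonneg a) (norm_nonneg N)
    nlinarith [sq_abs a]
  have hNN : ‖N (N v)‖ ^ 2 ≤ ‖N‖ ^ 2 * ‖N v‖ ^ 2 := by
    rw [← mul_pow]
    exact pow_le_pow_left₀ (norm_nonneg _) (N.le_opNorm (N v)) 2
  rw [← sq_lt_sq₀ (norm_nonneg _) (norm_nonneg _), happly,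
    norm_sq_add_smul_add_sq_smul_of_skew hN]
  nlinarith [mul_le_mul_of_nonneg_left hNN (by positivity : (0 : ℝ) ≤ a ^ 4)]

end SkewOperator

section EuclideanMatrices

variable {𝕜 ι κ : Type*} [RCLike 𝕜] [Fintype κ]

theorem Matrix.re_map_ofReal_mulVec (P : Matrix ι κ ℝ) (v : κ → ℂ) (i : ι) :
    ((P.map ((↑) : ℝ → ℂ) *ᵥ v) i).re = (P *ᵥ fun j => (v j).re) i := by
  simp [mulVec, dotProduct, Complex.re_sum]

theorem Matrix.im_map_ofReal_mulVec (P : Matrix ι κ ℝ) (v : κ → ℂ) (i : ι) :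
    ((P.map ((↑) : ℝ → ℂ) *ᵥ v) i).im = (P *ᵥ fun j => (v j).im) i := by
  simp [mulVec, dotProduct, Complex.im_sum]

variable [Fintype ι]

theorem EuclideanSpace.norm_sq_toLp_sumElim (u : ι → 𝕜) (w : κ → 𝕜) :
    ‖toLp 2 (Sum.elim u w)‖ ^ 2 = ‖toLp 2 u‖ ^ 2 + ‖toLp 2 w‖ ^ 2 := by
  simp [EuclideanSpace.norm_sq_eq, Fintype.sum_sum_type]

theorem Matrix.norm_toLp_mulVec_le [DecidableEq κ] (X : Matrix ι κ 𝕜) (u : κ → 𝕜) :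
    ‖toLp 2 (X *ᵥ u)‖ ≤ ‖X‖ * ‖toLp 2 u‖ :=
  X.l2_opNorm_mulVec (toLp 2 u)

theorem Matrix.l2_opNorm_fromBlocks_zero_zero_le [DecidableEq ι] [DecidableEq κ]
    {X : Matrix ι κ 𝕜} {Y : Matrix κ ι 𝕜} {s : ℝ} (hX : ‖X‖ ≤ s) (hY : ‖Y‖ ≤ s) :
    ‖fromBlocks 0 X Y 0‖ ≤ s := by
  have hs : 0 ≤ s := (norm_nonneg X).trans hX
  rw [← l2_opNorm_toEuclideanCLM]
  refine ContinuousLinearMap.opNorm_le_bound _ hs fun x => ?_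
  obtain ⟨u, w, rfl⟩ : ∃ u w, x = toLp 2 (Sum.elim u w) :=
    ⟨ofLp x ∘ Sum.inl, ofLp x ∘ Sum.inr, by simp⟩
  rw [← sq_le_sq₀ (norm_nonneg _) (by positivity), toEuclideanCLM_toLp, fromBlocks_mulVec]
  simp only [Sum.elim_comp_inl, Sum.elim_comp_inr, zero_mulVec, zero_add, add_zero]
  rw [EuclideanSpace.norm_sq_toLp_sumElim, mul_pow, EuclideanSpace.norm_sq_toLp_sumElim]
  have hXw : ‖toLp 2 (X *ᵥ w)‖ ^ 2 ≤ (s * ‖toLp 2 w‖) ^ 2 :=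
    pow_le_pow_left₀ (norm_nonneg _) ((X.norm_toLp_mulVec_le w).trans (by gcongr)) 2
  have hYu : ‖toLp 2 (Y *ᵥ u)‖ ^ 2 ≤ (s * ‖toLp 2 u‖) ^ 2 :=
    pow_le_pow_left₀ (norm_nonneg _) ((Y.norm_toLp_mulVec_le u).trans (by gcongr)) 2
  nlinarith

variable [DecidableEq ι]

theorem Matrix.inner_toEuclideanCLM_of_conjTranspose_eq_neg {N : Matrix ι ι ℝ} (hN : Nᴴ = -N)
    (x y : EuclideanSpace ℝ ι) :
    ⟪toEuclideanCLM (𝕜 := ℝ) N x, y⟫ = -⟪x, toEuclideanCLM (𝕜 := ℝ) N y⟫ := by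
  rw [← ContinuousLinearMap.adjoint_inner_right, ← ContinuousLinearMap.star_eq_adjoint,
    ← map_star, star_eq_conjTranspose, hN, map_neg]
  exact inner_neg_right x _

theorem Matrix.mulVec_eq_self_iff (M : Matrix ι ι ℝ) (v : ι → ℝ) :
    M *ᵥ v = v ↔ toEuclideanCLM (𝕜 := ℝ) M (toLp 2 v) = toLp 2 v := by
  rw [toEuclideanCLM_toLp, (WithLp.toLp_injective 2).eq_iff]

theorem mnorm2_le_one_of_isParacontraction {M : Matrix ι ι ℝ}
    (hM : IsParacontraction (toEuclideanCLM (𝕜 := ℝ) M)) : mnorm2 M ≤ 1 :=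
  ContinuousLinearMap.opNorm_le_bound _ zero_le_one fun x => by
    rw [one_mul]
    exact hM.norm_le x

theorem IsParacontraction.norm_lt_one_of_isEig {P : Matrix ι ι ℝ}
    (hP : IsParacontraction (toEuclideanCLM (𝕜 := ℝ) P)) {μ : ℂ} (hμ : IsEig P μ)
    (hμ1 : μ ≠ 1) : ‖μ‖ < 1 := by
  obtain ⟨v, hv0, hv⟩ := hμ
  set x : ι → ℝ := fun i => (v i).re
  set y : ι → ℝ := fun i => (v i).im
  have hx : P *ᵥ x = μ.re • x - μ.im • y := by
    funext i
    rw [← re_map_ofReal_mulVec, hv]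
    simp [x, y]
  have hy : P *ᵥ y = μ.im • x + μ.re • y := by
    funext i
    rw [← im_map_ofReal_mulVec, hv]
    simp only [Pi.smul_apply, smul_eq_mul, Complex.mul_im, Pi.add_apply, x, y]
    ring
  have hnorm : ‖toLp 2 (P *ᵥ x)‖ ^ 2 + ‖toLp 2 (P *ᵥ y)‖ ^ 2 =
      ‖μ‖ ^ 2 * (‖toLp 2 x‖ ^ 2 + ‖toLp 2 y‖ ^ 2) := by
    simp only [hx, hy, EuclideanSpace.real_norm_sq_eq, Complex.sq_norm, Complex.normSq_apply,
      Finset.mul_sum, ← Finset.sum_add_distrib]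
    refine Finset.sum_congr rfl fun i _ => ?_
    simp only [Pi.sub_apply, Pi.smul_apply, smul_eq_mul, Pi.add_apply]
    ring
  by_contra hlt
  have hμ2 : 1 ≤ ‖μ‖ ^ 2 := one_le_pow₀ (not_lt.mp hlt)
  obtain ⟨hxP, hyP⟩ := hP.apply_eq_self_of_norm_sq_add_le (x := toLp 2 x) (y := toLp 2 y) (by
    rw [toEuclideanCLM_toLp, toEuclideanCLM_toLp, hnorm]
    nlinarith [sq_nonneg ‖toLp 2 x‖, sq_nonneg ‖toLp 2 y‖])
  rw [← mulVec_eq_self_iff] at hxP hyP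
  have hfix : μ • v = v := by
    rw [← hv]
    funext i
    apply Complex.ext
    · rw [re_map_ofReal_mulVec, hxP]
    · rw [im_map_ofReal_mulVec, hyP]
  have hzero : (μ - 1) • v = 0 := by rw [sub_smul, one_smul, hfix, sub_self]
  exact hμ1 (sub_eq_zero.mp ((smul_eq_zero.mp hzero).resolve_right hv0))

end EuclideanMatrices

section Eigenvalues

variable {ι : Type*} [Fintype ι]

theorem finite_setOf_isEig (M : Matrix ι ι ℝ) : {μ | IsEig M μ}.Finite := by
  classical
  refine (Module.End.finite_hasEigenvalue (toLin' (M.map ((↑) : ℝ → ℂ)))).subset ?_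
  rintro μ ⟨v, hv0, hv⟩
  exact Module.End.hasEigenvalue_of_hasEigenvector ⟨Module.End.mem_eigenspace_iff.mpr hv, hv0⟩

theorem lamStar_lt_one {M : Matrix ι ι ℝ} (h : ∀ μ, IsEig M μ → μ ≠ 1 → ‖μ‖ < 1) :
    lamStar M < 1 := by
  set S := {r : ℝ | ∃ μ : ℂ, IsEig M μ ∧ μ ≠ 1 ∧ r = ‖μ‖}
  show sSup S < 1
  rcases S.eq_empty_or_nonempty with hS | hS
  · rw [hS, Real.sSup_empty]
    exact one_pos
  have hfin : S.Finite := ((finite_setOf_isEig M).image (‖·‖)).subset <| by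
    rintro _ ⟨μ, hμ, -, rfl⟩
    exact ⟨μ, hμ, rfl⟩
  refine (hfin.csSup_lt_iff hS).mpr ?_
  rintro _ ⟨μ, hμ, hμ1, rfl⟩
  exact h μ hμ hμ1

end Eigenvalues

section ExtraGradient

variable {n m : ℕ}

def skewBlock (A : Matrix (Fin n) (Fin m) ℝ) : Matrix (Fin n ⊕ Fin m) (Fin n ⊕ Fin m) ℝ :=
  fromBlocks 0 (-A) Aᵀ 0

theorem skewBlock_conjTranspose (A : Matrix (Fin n) (Fin m) ℝ) :
    (skewBlock A)ᴴ = -skewBlock A := by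
  rw [conjTranspose_eq_transpose_of_trivial, skewBlock, fromBlocks_transpose, fromBlocks_neg]
  simp

theorem norm_skewBlock_le (A : Matrix (Fin n) (Fin m) ℝ) : ‖skewBlock A‖ ≤ ‖A‖ := by
  refine l2_opNorm_fromBlocks_zero_zero_le (norm_neg A).le ?_
  rw [← conjTranspose_eq_transpose_of_trivial, l2_opNorm_conjTranspose]

theorem MEG_self_eq (α : ℝ) (A : Matrix (Fin n) (Fin m) ℝ) :
    MEG α α A = 1 + α • skewBlock A + α ^ 2 • (skewBlock A * skewBlock A) := by
  rw [MEG, skewBlock, fromBlocks_multiply, ← fromBlocks_one]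
  simp only [fromBlocks_smul, fromBlocks_add, Matrix.mul_zero, Matrix.zero_mul,
    Matrix.neg_mul, Matrix.mul_neg, add_zero, zero_add, smul_neg, smul_zero, neg_zero, sq,
    sub_eq_add_neg, neg_smul]

theorem isParacontraction_MEG {α : ℝ} {A : Matrix (Fin n) (Fin m) ℝ} (h : |α| * ‖A‖ < 1) :
    IsParacontraction (toEuclideanCLM (𝕜 := ℝ) (MEG α α A)) := by
  rw [MEG_self_eq, map_add, map_add, map_one, map_smul, map_smul, map_mul]
  refine isParacontraction_one_add_smul_add_sq_smul_of_skew
    (inner_toEuclideanCLM_of_conjTranspose_eq_neg (skewBlock_conjTranspose A)) ?_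
  exact (mul_le_mul_of_nonneg_left (norm_skewBlock_le A) (abs_nonneg α)).trans_lt h

variable {α γ : ℝ} {A : ℕ → Matrix (Fin n) (Fin m) ℝ} {k : ℕ}

theorem isParacontraction_periodProd
    (h : ∀ i < k, IsParacontraction (toEuclideanCLM (𝕜 := ℝ) (MEG α γ (A i)))) :
    IsParacontraction (toEuclideanCLM (𝕜 := ℝ) (periodProd α γ A k)) := by
  induction k with
  | zero => simp [IsParacontraction, periodProd]
  | succ k ih =>
    rw [periodProd, map_mul, FunLike.coe_mul_eq_comp]
    exact (h k k.lt_succ_self).comp (ih fun i hi => h i (hi.trans k.lt_succ_self))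

theorem periodProd_apply_eq_self_iff
    (h : ∀ i < k, IsParacontraction (toEuclideanCLM (𝕜 := ℝ) (MEG α γ (A i))))
    (x : EuclideanSpace ℝ (Fin n ⊕ Fin m)) :
    toEuclideanCLM (𝕜 := ℝ) (periodProd α γ A k) x = x ↔
      ∀ i < k, toEuclideanCLM (𝕜 := ℝ) (MEG α γ (A i)) x = x := by
  induction k with
  | zero => simp [periodProd]
  | succ k ih =>
    have h' : ∀ i < k, IsParacontraction (toEuclideanCLM (𝕜 := ℝ) (MEG α γ (A i))) :=
      fun i hi => h i (hi.trans k.lt_succ_self)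
    rw [periodProd, map_mul, mul_apply_eq_comp,
      (h k k.lt_succ_self).comp_apply_eq_self_iff (isParacontraction_periodProd h'), ih h',
      Nat.forall_lt_succ_right, and_comm]

end ExtraGradient

/-- For matrices `A_0, …, A_{T-1}` with largest singular value `σ > 0` and EG step sizes
`α = γ < 1/σ`, with `Ã = M_EG(A_{T-1}) ⋯ M_EG(A_0)`:
(i) `‖M_EG(A_i)‖₂ ≤ 1` for each `i`;
(ii) `ker(Ã − I) = ∩_i ker(M_EG(A_i) − I)`;
(iii) every eigenvalue of `Ã` other than `1` has modulus `< 1`, i.e. `λ* < 1`. -/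
theorem stmt10 {n m : ℕ} (T : ℕ) (hT : 0 < T)
    (A : ℕ → Matrix (Fin n) (Fin m) ℝ)
    (σ : ℝ)
    (hσdef : σ = (Finset.range T).sup' (Finset.nonempty_range_iff.mpr hT.ne')
        (fun i => mnorm2 (A i)))
    (hσpos : 0 < σ)
    (α γ : ℝ) (hα : 0 < α) (hαγ : α = γ) (hstep : α < 1 / σ) :
    (∀ i < T, mnorm2 (MEG α γ (A i)) ≤ 1) ∧
    (∀ v : Fin n ⊕ Fin m → ℝ,
        (periodProd α γ A T).mulVec v = v ↔ ∀ i < T, (MEG α γ (A i)).mulVec v = v) ∧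
    (∀ μ : ℂ, IsEig (periodProd α γ A T) μ → μ ≠ 1 → ‖μ‖ < 1) ∧
    lamStar (periodProd α γ A T) < 1 := by
  subst hαγ
  have hMEG (i : ℕ) (hi : i < T) :
      IsParacontraction (toEuclideanCLM (𝕜 := ℝ) (MEG α α (A i))) := by
    have hAσ : ‖A i‖ ≤ σ :=
      hσdef ▸ Finset.le_sup' (fun i => mnorm2 (A i)) (Finset.mem_range.mpr hi)
    refine isParacontraction_MEG ?_
    rw [abs_of_pos hα]
    exact (mul_le_mul_of_nonneg_left hAσ hα.le).trans_lt ((lt_div_iff₀ hσpos).mp hstep)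
  have heig : ∀ μ : ℂ, IsEig (periodProd α α A T) μ → μ ≠ 1 → ‖μ‖ < 1 :=
    fun _ => (isParacontraction_periodProd hMEG).norm_lt_one_of_isEig
  refine ⟨fun i hi => mnorm2_le_one_of_isParacontraction (hMEG i hi), fun v => ?_, heig,
    lamStar_lt_one heig⟩
  simp only [mulVec_eq_self_iff, periodProd_apply_eq_self_iff hMEG]
end

section
/- Let A_1, ..., A_T ∈ ℝ^{n×m}, let σ = max{σ' : σ' is a singular value of some A_i} with σ > 0, suppose the EG step sizes satisfy α = γ < 1/σ, and let Ã = M_EG(A_T)···M_EG(A_1). Then ker((Ã − I)²) = ker(Ã − I); that is, every Jordan block of Ã corresponding to the eigenvalue 1 has size 1 (the eigenvalue 1, if present, is semisimple). -/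
/-!
Let `J = [[0, A], [-Aᵀ, 0]]`; it is skew-symmetric with `‖J‖ ≤ ‖A‖`, and for `α = γ` one has
`M_EG(A) = 1 + K + K²` with `K = -αJ`. For a skew-adjoint `K`,
`‖(1 + K + K²) v‖² = ‖v‖² - ‖K v‖² + ‖K (K v)‖²`, so `M_EG(A)` is a contraction as soon as
`α ‖A‖ ≤ 1`, and then so is the product `Ã`. A contraction `B` has no Jordan block of size `≥ 2`
at the eigenvalue `1`: if `(B - 1)² v = 0` and `w = (B - 1) v`, then `Bᵏ v = v + k w` stays
bounded, which forces `w = 0`.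
-/

open Matrix

open scoped Matrix.Norms.L2Operator

section SkewContraction

open scoped RealInnerProductSpace

variable {E : Type*} [NormedAddCommGroup E] [InnerProductSpace ℝ E] [CompleteSpace E]

theorem ContinuousLinearMap.norm_one_add_add_mul_self_le_one {K : E →L[ℝ] E}
    (hK : star K = -K) (hK1 : ‖K‖ ≤ 1) : ‖1 + K + K * K‖ ≤ 1 := by
  have skew (x y : E) : ⟪K x, y⟫ = -⟪x, K y⟫ := by
    rw [← adjoint_inner_right, ← star_eq_adjoint, hK, _root_.neg_apply, inner_neg_right]
  have inner_apply_self (x : E) : ⟪x, K x⟫ = 0 := by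
    have := skew x x
    rw [real_inner_comm] at this
    linarith
  refine opNorm_le_bound _ zero_le_one fun v => ?_
  have hKKv : ‖K (K v)‖ ≤ ‖K v‖ := by simpa using K.le_of_opNorm_le hK1 (K v)
  have key : ‖(1 + K + K * K) v‖ ^ 2 = ‖v‖ ^ 2 - ‖K v‖ ^ 2 + ‖K (K v)‖ ^ 2 := by
    have h := skew v (K v)
    rw [real_inner_self_eq_norm_sq] at h
    simp only [_root_.add_apply, one_apply_eq_self, mul_apply_eq_comp]
    rw [norm_add_sq_real, norm_add_sq_real, inner_add_left, inner_apply_self, inner_apply_self]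
    linarith
  rw [one_mul, ← sq_le_sq₀ (norm_nonneg _) (norm_nonneg _), key]
  linarith [pow_le_pow_left₀ (norm_nonneg _) hKKv 2]

end SkewContraction

theorem LinearMap.ker_sub_one_sq_eq_of_norm_map_le {𝕜 E : Type*} [RCLike 𝕜]
    [NormedAddCommGroup E] [NormedSpace 𝕜 E] {f : E →ₗ[𝕜] E} (hf : ∀ x, ‖f x‖ ≤ ‖x‖) :
    ker ((f - 1) ^ 2) = ker (f - 1) := by
  refine le_antisymm (fun x hx => ?_) (ker_le_ker_comp _ _)
  set w := f x - x
  have hw : f w = w := by simpa [pow_two, w, sub_eq_zero] using hx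
  have iterate (k : ℕ) : f^[k] x = x + k • w := by
    induction k with
    | zero => simp
    | succ k ih =>
      rw [Function.iterate_succ_apply', ih, map_add, map_nsmul, hw, succ_nsmul]
      simp only [w]
      abel
  have bounded (k : ℕ) : (k : ℝ) * ‖w‖ ≤ 2 * ‖x‖ := by
    have hk : ‖f^[k] x‖ ≤ ‖x‖ := by
      induction k with
      | zero => simp
      | succ k ih => exact (Function.iterate_succ_apply' f k x ▸ hf _).trans ih
    calc (k : ℝ) * ‖w‖ = ‖f^[k] x - x‖ := by
          rw [iterate, add_sub_cancel_left, RCLike.norm_nsmul 𝕜, nsmul_eq_mul]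
      _ ≤ ‖f^[k] x‖ + ‖x‖ := norm_sub_le _ _
      _ ≤ 2 * ‖x‖ := by linarith
  have hw0 : w = 0 := by
    by_contra hne
    obtain ⟨k, hk⟩ := exists_nat_gt (2 * ‖x‖ / ‖w‖)
    rw [div_lt_iff₀ (norm_pos_iff.mpr hne)] at hk
    linarith [bounded k]
  simpa [w, sub_eq_zero] using hw0

theorem Matrix.mulVec_sub_one_mul_self_eq_zero_iff {ι : Type*} [Fintype ι] [DecidableEq ι]
    {B : Matrix ι ι ℝ} (hB : ‖B‖ ≤ 1) (v : ι → ℝ) :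
    ((B - 1) * (B - 1)) *ᵥ v = 0 ↔ (B - 1) *ᵥ v = 0 := by
  have hker := LinearMap.ker_sub_one_sq_eq_of_norm_map_le
    (f := (toEuclideanCLM (𝕜 := ℝ) B : EuclideanSpace ℝ ι →ₗ[ℝ] _))
    fun x => by simpa using (toEuclideanCLM (𝕜 := ℝ) B).le_of_opNorm_le hB x
  have mulVec_eq_zero_iff (M : Matrix ι ι ℝ) :
      M *ᵥ v = 0 ↔ toEuclideanCLM (𝕜 := ℝ) M (WithLp.toLp 2 v) = 0 := by
    rw [toEuclideanCLM_toLp, WithLp.toLp_eq_zero]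
  rw [mulVec_eq_zero_iff, mulVec_eq_zero_iff, map_mul, map_sub, map_one]
  exact SetLike.ext_iff.mp hker (WithLp.toLp 2 v)

theorem EuclideanSpace.norm_toLp_sumElim_sq {ι κ : Type*} [Fintype ι] [Fintype κ]
    (x : ι → ℝ) (y : κ → ℝ) :
    ‖WithLp.toLp 2 (Sum.elim x y)‖ ^ 2 = ‖WithLp.toLp 2 x‖ ^ 2 + ‖WithLp.toLp 2 y‖ ^ 2 := by
  simp only [EuclideanSpace.norm_sq_eq, Fintype.sum_sum_type, Sum.elim_inl, Sum.elim_inr]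

theorem mnorm2_eq_norm {ι κ : Type*} [Fintype ι] [Fintype κ] [DecidableEq κ]
    (M : Matrix ι κ ℝ) : mnorm2 M = ‖M‖ :=
  rfl

/-- The Jacobian `J` of the field `F (x, y) = (A y, -Aᵀ x)` of the bilinear game
`min_x max_y xᵀ A y`; the EG step `z ↦ z - α F (z - γ F z)` has matrix `1 - α J + α γ J²`. -/
def gameMatrix {ι κ : Type*} (A : Matrix ι κ ℝ) : Matrix (ι ⊕ κ) (ι ⊕ κ) ℝ :=
  fromBlocks 0 A (-Aᵀ) 0

theorem gameMatrix_transpose {ι κ : Type*} (A : Matrix ι κ ℝ) :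
    (gameMatrix A)ᵀ = -gameMatrix A := by
  simp [gameMatrix, fromBlocks_transpose, fromBlocks_neg]

theorem norm_gameMatrix_le {ι κ : Type*} [Fintype ι] [Fintype κ] [DecidableEq ι]
    [DecidableEq κ] (A : Matrix ι κ ℝ) : ‖gameMatrix A‖ ≤ ‖A‖ := by
  rw [cstar_norm_def]
  refine ContinuousLinearMap.opNorm_le_bound _ (norm_nonneg A) fun u => ?_
  set x := fun i => u (Sum.inl i)
  set y := fun j => u (Sum.inr j)
  have hu : u = WithLp.toLp 2 (Sum.elim x y) := by ext (i | j) <;> rfl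
  have hAy : ‖WithLp.toLp 2 (A *ᵥ y)‖ ≤ ‖A‖ * ‖WithLp.toLp 2 y‖ :=
    l2_opNorm_mulVec A (WithLp.toLp 2 y)
  have hAx : ‖WithLp.toLp 2 (Aᵀ *ᵥ x)‖ ≤ ‖A‖ * ‖WithLp.toLp 2 x‖ := by
    have := l2_opNorm_mulVec Aᴴ (WithLp.toLp 2 x)
    rwa [l2_opNorm_conjTranspose, conjTranspose_eq_transpose_of_trivial] at this
  rw [← sq_le_sq₀ (norm_nonneg _) (by positivity), hu, toEuclideanCLM_toLp, gameMatrix,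
    fromBlocks_mulVec, mul_pow, EuclideanSpace.norm_toLp_sumElim_sq,
    EuclideanSpace.norm_toLp_sumElim_sq]
  simp only [zero_mulVec, zero_add, add_zero, neg_mulVec, Sum.elim_comp_inl, Sum.elim_comp_inr,
    WithLp.toLp_neg, norm_neg]
  nlinarith [norm_nonneg (WithLp.toLp 2 (A *ᵥ y)), norm_nonneg (WithLp.toLp 2 (Aᵀ *ᵥ x))]

theorem MEG_eq_gameMatrix {n m : ℕ} (α γ : ℝ) (A : Matrix (Fin n) (Fin m) ℝ) :
    MEG α γ A = 1 - α • gameMatrix A + (α * γ) • (gameMatrix A * gameMatrix A) := by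
  rw [MEG, gameMatrix, fromBlocks_multiply, ← fromBlocks_one, fromBlocks_smul, fromBlocks_smul]
  conv_rhs => rw [sub_eq_add_neg, fromBlocks_neg, fromBlocks_add, fromBlocks_add]
  congr 1 <;> simp <;> module

theorem norm_MEG_self_le_one {n m : ℕ} {α : ℝ} {A : Matrix (Fin n) (Fin m) ℝ}
    (h : |α| * ‖A‖ ≤ 1) : ‖MEG α α A‖ ≤ 1 := by
  set K := -α • gameMatrix A
  have hMEG : MEG α α A = 1 + K + K * K := by
    rw [MEG_eq_gameMatrix]
    simp only [K, smul_mul_smul]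
    module
  rw [hMEG, cstar_norm_def, map_add, map_add, map_mul, map_one]
  apply ContinuousLinearMap.norm_one_add_add_mul_self_le_one
  · rw [← map_star, star_eq_conjTranspose, conjTranspose_eq_transpose_of_trivial, transpose_smul,
      gameMatrix_transpose, smul_neg, map_neg]
  · rw [l2_opNorm_toEuclideanCLM, norm_smul, norm_neg, Real.norm_eq_abs]
    exact (mul_le_mul_of_nonneg_left (norm_gameMatrix_le A) (abs_nonneg α)).trans h

theorem norm_periodProd_self_le_one {n m : ℕ} {α : ℝ} {A : ℕ → Matrix (Fin n) (Fin m) ℝ} {k : ℕ}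
    (hA : ∀ i < k, |α| * ‖A i‖ ≤ 1) : ‖periodProd α α A k‖ ≤ 1 := by
  induction k with
  | zero =>
    rw [periodProd, cstar_norm_def, map_one]
    exact ContinuousLinearMap.norm_id_le
  | succ k ih =>
    rw [periodProd]
    exact (norm_mul_le _ _).trans (mul_le_one₀ (norm_MEG_self_le_one (hA k k.lt_succ_self))
      (norm_nonneg _) (ih fun i hi => hA i (hi.trans k.lt_succ_self)))

/-- For matrices `A_0, …, A_{T-1}` with largest singular value `σ > 0` and EG step sizes
`α = γ < 1/σ`, and `Ã = M_EG(A_{T-1}) ⋯ M_EG(A_0)`, one has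
`ker((Ã − I)²) = ker(Ã − I)`: the eigenvalue `1` of `Ã` (if present) is semisimple, i.e. all
its Jordan blocks have size `1`. -/
theorem stmt12 {n m : ℕ} (T : ℕ) (hT : 0 < T)
    (A : ℕ → Matrix (Fin n) (Fin m) ℝ)
    (σ : ℝ)
    (hσdef : σ = (Finset.range T).sup' (Finset.nonempty_range_iff.mpr hT.ne')
        (fun i => mnorm2 (A i)))
    (hσpos : 0 < σ)
    (α γ : ℝ) (hα : 0 < α) (hαγ : α = γ) (hstep : α < 1 / σ) :
    ∀ v : Fin n ⊕ Fin m → ℝ,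
      ((periodProd α γ A T - 1) * (periodProd α γ A T - 1)).mulVec v = 0 ↔
        (periodProd α γ A T - 1).mulVec v = 0 := by
  subst hαγ
  have hασ : α * σ < 1 := (lt_div_iff₀ hσpos).mp hstep
  have hA (i : ℕ) (hi : i < T) : |α| * ‖A i‖ ≤ 1 := by
    have hAσ : ‖A i‖ ≤ σ := by
      rw [← mnorm2_eq_norm, hσdef]
      exact Finset.le_sup' (fun i => mnorm2 (A i)) (Finset.mem_range.mpr hi)
    rw [abs_of_pos hα]
    nlinarith
  exact Matrix.mulVec_sub_one_mul_self_eq_zero_iff (norm_periodProd_self_le_one hA)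
end

section
/- Let A ∈ ℝ^{n×m} and let α, γ > 0. Then for every x ∈ ℝⁿ and y ∈ ℝᵐ, writing X = (x, y) ∈ ℝ^{n+m}, one has ‖Aᵀ x‖₂ + ‖A y‖₂ ≤ (2(1 + γ‖A‖₂)/α) · ‖(M_EG(A) − I) X‖₂. In particular, if along a trajectory ‖(M_EG(A_i) − I) X_t‖₂ converges to 0 at rate O(g(t)), then Δ_{i,t} = ‖A_iᵀ x_t‖₂ + ‖A_i y_t‖₂ converges to 0 at rate O(g(t)). -/
/-!
With `u = Aᵀx`, `v = Ay`, the residual is `(M_EG − I)X = α(−s, t)` where `s = γAu + v` and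
`t = u − γAᵀv`. Eliminating `v` gives `(I + γ²AᵀA)u = t + γAᵀs`, and since `I + γ²AᵀA ⪰ I`,
`‖u‖ ≤ ‖t‖ + γ‖A‖‖s‖`; symmetrically `‖v‖ ≤ ‖s‖ + γ‖A‖‖t‖`. Adding, and using
`‖s‖ + ‖t‖ ≤ 2‖(−s, t)‖`, yields the bound, from which the rate statement follows at once.
-/

open Matrix

/-- Euclidean norm of a real vector. -/
noncomputable def vnorm2 {ι : Type*} [Fintype ι] (v : ι → ℝ) : ℝ :=
  Real.sqrt (∑ i, v i ^ 2)

open scoped Matrix.Norms.L2Operator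

section

variable {ι κ : Type*} [Fintype ι] [Fintype κ]

lemma vnorm2_eq_norm_toLp (v : ι → ℝ) : vnorm2 v = ‖WithLp.toLp 2 v‖ := by
  simp [vnorm2, EuclideanSpace.norm_eq]

lemma vnorm2_nonneg (v : ι → ℝ) : 0 ≤ vnorm2 v := Real.sqrt_nonneg _

lemma vnorm2_add_le (v w : ι → ℝ) : vnorm2 (v + w) ≤ vnorm2 v + vnorm2 w := by
  simpa only [vnorm2_eq_norm_toLp, WithLp.toLp_add] using norm_add_le _ _

lemma vnorm2_smul (c : ℝ) (v : ι → ℝ) : vnorm2 (c • v) = |c| * vnorm2 v := by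
  simp only [vnorm2_eq_norm_toLp, WithLp.toLp_smul, norm_smul, Real.norm_eq_abs]

lemma vnorm2_neg (v : ι → ℝ) : vnorm2 (-v) = vnorm2 v := by
  simp only [vnorm2_eq_norm_toLp, WithLp.toLp_neg, norm_neg]

lemma vnorm2_sq (v : ι → ℝ) : vnorm2 v ^ 2 = v ⬝ᵥ v := by
  rw [vnorm2, Real.sq_sqrt (by positivity)]
  simp [dotProduct, sq]

lemma dotProduct_le_vnorm2_mul (v w : ι → ℝ) : v ⬝ᵥ w ≤ vnorm2 v * vnorm2 w := by
  simpa [vnorm2_eq_norm_toLp, EuclideanSpace.inner_toLp_toLp, dotProduct_comm]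
    using real_inner_le_norm (WithLp.toLp 2 v) (WithLp.toLp 2 w)

lemma vnorm2_sumElim_sq (v : ι → ℝ) (w : κ → ℝ) :
    vnorm2 (Sum.elim v w) ^ 2 = vnorm2 v ^ 2 + vnorm2 w ^ 2 := by
  simp only [vnorm2_sq, sumElim_dotProduct_sumElim]

lemma vnorm2_add_vnorm2_le_two_mul_sumElim (v : ι → ℝ) (w : κ → ℝ) :
    vnorm2 v + vnorm2 w ≤ 2 * vnorm2 (Sum.elim v w) := by
  nlinarith [vnorm2_sumElim_sq v w, vnorm2_nonneg (Sum.elim v w), sq_nonneg (vnorm2 v - vnorm2 w)]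

lemma vnorm2_le_vnorm2_add_transpose_mulVec_mulVec (B : Matrix ι κ ℝ) (w : κ → ℝ) :
    vnorm2 w ≤ vnorm2 (w + Bᵀ *ᵥ (B *ᵥ w)) := by
  have hBw : w ⬝ᵥ (w + Bᵀ *ᵥ (B *ᵥ w)) = vnorm2 w ^ 2 + (B *ᵥ w) ⬝ᵥ (B *ᵥ w) := by
    rw [dotProduct_add, dotProduct_mulVec, vecMul_transpose, dotProduct_comm, vnorm2_sq]
  have hsq : vnorm2 w ^ 2 ≤ vnorm2 w * vnorm2 (w + Bᵀ *ᵥ (B *ᵥ w)) := by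
    have := dotProduct_le_vnorm2_mul w (w + Bᵀ *ᵥ (B *ᵥ w))
    nlinarith [vnorm2_sq (B *ᵥ w), sq_nonneg (vnorm2 (B *ᵥ w))]
  nlinarith [vnorm2_nonneg w, vnorm2_nonneg (w + Bᵀ *ᵥ (B *ᵥ w))]

variable [DecidableEq κ]

lemma mnorm2_eq_l2_opNorm (A : Matrix ι κ ℝ) : mnorm2 A = ‖A‖ := rfl

lemma mnorm2_nonneg (A : Matrix ι κ ℝ) : 0 ≤ mnorm2 A := norm_nonneg _

lemma vnorm2_mulVec_le (A : Matrix ι κ ℝ) (v : κ → ℝ) :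
    vnorm2 (A *ᵥ v) ≤ mnorm2 A * vnorm2 v := by
  simpa [vnorm2_eq_norm_toLp, mnorm2_eq_l2_opNorm] using l2_opNorm_mulVec A (WithLp.toLp 2 v)

lemma mnorm2_transpose [DecidableEq ι] (A : Matrix ι κ ℝ) : mnorm2 Aᵀ = mnorm2 A := by
  simpa [mnorm2_eq_l2_opNorm] using l2_opNorm_conjTranspose A

lemma vnorm2_le_of_extragradient_residual [DecidableEq ι] (B : Matrix ι κ ℝ) {γ : ℝ}
    (hγ : 0 ≤ γ) (u : κ → ℝ) (v : ι → ℝ) :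
    vnorm2 u ≤ vnorm2 (u - γ • Bᵀ *ᵥ v) + γ * mnorm2 B * vnorm2 (γ • B *ᵥ u + v) := by
  have hu : u + (γ • B)ᵀ *ᵥ ((γ • B) *ᵥ u) =
      (u - γ • Bᵀ *ᵥ v) + γ • Bᵀ *ᵥ (γ • B *ᵥ u + v) := by
    simp only [transpose_smul, smul_mulVec, mulVec_add, mulVec_smul]
    module
  calc vnorm2 u ≤ vnorm2 (u + (γ • B)ᵀ *ᵥ ((γ • B) *ᵥ u)) :=
        vnorm2_le_vnorm2_add_transpose_mulVec_mulVec _ _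
    _ ≤ vnorm2 (u - γ • Bᵀ *ᵥ v) + γ * vnorm2 (Bᵀ *ᵥ (γ • B *ᵥ u + v)) := by
        rw [hu]
        exact (vnorm2_add_le _ _).trans_eq (by rw [vnorm2_smul, abs_of_nonneg hγ])
    _ ≤ vnorm2 (u - γ • Bᵀ *ᵥ v) + γ * (mnorm2 B * vnorm2 (γ • B *ᵥ u + v)) := by
        grw [vnorm2_mulVec_le, mnorm2_transpose]
    _ = _ := by ring

end

lemma MEG_sub_one_mulVec {n m : ℕ} (α γ : ℝ) (A : Matrix (Fin n) (Fin m) ℝ)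
    (x : Fin n → ℝ) (y : Fin m → ℝ) :
    (MEG α γ A - 1) *ᵥ Sum.elim x y =
      α • Sum.elim (-(γ • A *ᵥ (Aᵀ *ᵥ x) + A *ᵥ y)) (Aᵀ *ᵥ x - γ • Aᵀ *ᵥ (A *ᵥ y)) := by
  rw [sub_mulVec, one_mulVec, MEG, fromBlocks_mulVec]
  ext (i | j) <;> simp [sub_mulVec, smul_mulVec, neg_mulVec, ← mulVec_mulVec] <;> ring

lemma vnorm2_add_vnorm2_le_MEG_residual {n m : ℕ} (A : Matrix (Fin n) (Fin m) ℝ) {α γ : ℝ}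
    (hα : 0 < α) (hγ : 0 ≤ γ) (x : Fin n → ℝ) (y : Fin m → ℝ) :
    vnorm2 (Aᵀ *ᵥ x) + vnorm2 (A *ᵥ y) ≤
      2 * (1 + γ * mnorm2 A) / α * vnorm2 ((MEG α γ A - 1) *ᵥ Sum.elim x y) := by
  set u := Aᵀ *ᵥ x
  set v := A *ᵥ y
  set s := γ • A *ᵥ u + v
  set t := u - γ • Aᵀ *ᵥ v
  have hu : vnorm2 u ≤ vnorm2 t + γ * mnorm2 A * vnorm2 s :=
    vnorm2_le_of_extragradient_residual A hγ u v
  have hv : vnorm2 v ≤ vnorm2 s + γ * mnorm2 A * vnorm2 t := by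
    have h := vnorm2_le_of_extragradient_residual Aᵀ hγ v (-u)
    have hs : v - γ • Aᵀᵀ *ᵥ (-u) = s := by
      simp only [transpose_transpose, mulVec_neg, smul_neg, sub_neg_eq_add, s]
      abel
    have ht : γ • Aᵀ *ᵥ v + -u = -t := by
      simp only [t]
      abel
    rwa [hs, ht, vnorm2_neg, mnorm2_transpose] at h
  have hst : α * (vnorm2 s + vnorm2 t) ≤ 2 * vnorm2 ((MEG α γ A - 1) *ᵥ Sum.elim x y) := by
    rw [MEG_sub_one_mulVec, vnorm2_smul, abs_of_pos hα, ← vnorm2_neg s]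
    nlinarith [vnorm2_add_vnorm2_le_two_mul_sumElim (-s) t]
  have hA : 0 ≤ γ * mnorm2 A := mul_nonneg hγ (mnorm2_nonneg A)
  rw [div_mul_eq_mul_div, le_div_iff₀ hα]
  calc (vnorm2 u + vnorm2 v) * α ≤ (1 + γ * mnorm2 A) * (α * (vnorm2 s + vnorm2 t)) := by
        nlinarith
    _ ≤ 2 * (1 + γ * mnorm2 A) * vnorm2 ((MEG α γ A - 1) *ᵥ Sum.elim x y) := by
        nlinarith

/-- For every `x, y`, writing `X = (x, y)`,
`‖Aᵀ x‖₂ + ‖A y‖₂ ≤ (2(1 + γ‖A‖₂)/α)·‖(M_EG(A) − I) X‖₂`; in particular if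
`‖(M_EG(A_i) − I) X_t‖₂ → 0` at rate `O(g(t))` along a trajectory, then
`Δ_{i,t} = ‖A_iᵀ x_t‖₂ + ‖A_i y_t‖₂ → 0` at rate `O(g(t))`. -/
theorem stmt13 {n m : ℕ} (A : Matrix (Fin n) (Fin m) ℝ) (α γ : ℝ) (hα : 0 < α) (hγ : 0 < γ) :
    (∀ (x : Fin n → ℝ) (y : Fin m → ℝ),
      vnorm2 (Aᵀ.mulVec x) + vnorm2 (A.mulVec y) ≤
        (2 * (1 + γ * mnorm2 A) / α) *
          vnorm2 ((MEG α γ A - 1).mulVec (Sum.elim x y))) ∧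
    (∀ (X : ℕ → ((Fin n ⊕ Fin m) → ℝ)) (g : ℕ → ℝ) (c : ℝ),
      (∀ t, vnorm2 ((MEG α γ A - 1).mulVec (X t)) ≤ c * g t) →
      ∃ c' : ℝ, ∀ t,
        vnorm2 (Aᵀ.mulVec fun j => X t (Sum.inl j)) +
          vnorm2 (A.mulVec fun j => X t (Sum.inr j)) ≤ c' * g t) := by
  have hbound := vnorm2_add_vnorm2_le_MEG_residual A hα hγ.le
  refine ⟨hbound, fun X g c hX => ⟨2 * (1 + γ * mnorm2 A) / α * c, fun t => ?_⟩⟩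
  have hK : 0 ≤ 2 * (1 + γ * mnorm2 A) / α := by
    have := mnorm2_nonneg A
    positivity
  calc _ ≤ 2 * (1 + γ * mnorm2 A) / α * vnorm2 ((MEG α γ A - 1) *ᵥ X t) := by
        have h := hbound (X t ∘ Sum.inl) (X t ∘ Sum.inr)
        rwa [Sum.elim_comp_inl_inr] at h
    _ ≤ 2 * (1 + γ * mnorm2 A) / α * (c * g t) := by gcongr; exact hX t
    _ = _ := by ring
end

section
/- Let A₁ = [1, −1] and A₂ = [−1, 1] be 1×2 payoff matrices (so n = 1, m = 2), and consider the 6×6 negative-momentum iterative matrices M_NM(A₂, A₁) and M_NM(A₁, A₂). For every step size η > 0 and all momentum parameters β₁ ≤ 0, β₂ ≤ 0, the spectral radius of the one-period product M_NM(A₁, A₂)·M_NM(A₂, A₁) is strictly greater than 1. -/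
/-! The direction `(1, -1)` of the second player's strategy space is invariant under both games,
and on the corresponding four-dimensional invariant subspace the one-period product acts as the
product `N` of the negative-momentum matrices of the `1 × 1` pairs `(A', A) = ([-1], [2])` and
`([1], [-2])`. A direct computation gives `det (1 - N) = -4η⁴ < 0`; since the characteristic
polynomial of `N` is monic, the intermediate value theorem yields a real eigenvalue `t > 1` of `N`,
hence of the product. -/

open Matrix

/-- The negative-momentum (NM) iterative matrix
`M_NM(A', A) = [[(1+β₁)I, −ηA, −β₁I, 0], [η(1+β₁)A'ᵀ, (1+β₂)I − η²A'ᵀA, −ηβ₁A'ᵀ, −β₂I],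
[I, 0, 0, 0], [0, I, 0, 0]]`. -/
noncomputable def MNM {n m : ℕ} (η β₁ β₂ : ℝ) (A' A : Matrix (Fin n) (Fin m) ℝ) :
    Matrix ((Fin n ⊕ Fin m) ⊕ (Fin n ⊕ Fin m)) ((Fin n ⊕ Fin m) ⊕ (Fin n ⊕ Fin m)) ℝ :=
  fromBlocks
    (fromBlocks ((1 + β₁) • 1) ((-η) • A)
      ((η * (1 + β₁)) • A'ᵀ) ((1 + β₂) • 1 - (η ^ 2) • (A'ᵀ * A)))
    (fromBlocks ((-β₁) • 1) 0 ((-(η * β₁)) • A'ᵀ) ((-β₂) • 1))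
    1 0

/-- `A₁ = [1, −1]`. -/
noncomputable def A1 : Matrix (Fin 1) (Fin 2) ℝ := !![1, -1]

/-- `A₂ = [−1, 1]`. -/
noncomputable def A2 : Matrix (Fin 1) (Fin 2) ℝ := !![-1, 1]

namespace Matrix

variable {ι κ : Type*} [Fintype ι] [Fintype κ]

open Polynomial Filter in
theorem exists_mulVec_eq_smul_gt_one_of_det_one_sub_neg [DecidableEq ι] {M : Matrix ι ι ℝ}
    (hM : (1 - M).det < 0) : ∃ t : ℝ, 1 < t ∧ ∃ v ≠ 0, M *ᵥ v = t • v := by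
  have : Nonempty ι := by
    rcases isEmpty_or_nonempty ι with h | h
    · rw [det_isEmpty] at hM
      exact absurd hM zero_lt_one.not_gt
    · exact h
  have htop : Tendsto (fun t => M.charpoly.eval t) atTop atTop :=
    tendsto_atTop_of_leadingCoeff_nonneg _
      (by rw [M.charpoly_degree_eq_dim]; exact_mod_cast Fintype.card_pos)
      (by rw [M.charpoly_monic.leadingCoeff]; exact zero_le_one)
  have h1 : M.charpoly.eval 1 < 0 := by rwa [M.eval_charpoly, scalar_apply, diagonal_one]
  obtain ⟨T, hT1, hT⟩ := ((eventually_gt_atTop 1).and (htop.eventually_ge_atTop 0)).exists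
  obtain ⟨t, ht, hroot : M.charpoly.eval t = 0⟩ :=
    intermediate_value_Icc hT1.le M.charpoly.continuous.continuousOn ⟨h1.le, hT⟩
  refine ⟨t, ht.1.lt_of_ne (by rintro rfl; exact h1.ne hroot), ?_⟩
  rw [M.eval_charpoly] at hroot
  obtain ⟨v, hv, hMv⟩ := exists_mulVec_eq_zero_iff.mpr hroot
  refine ⟨v, hv, ?_⟩
  rwa [sub_mulVec, scalar_apply, ← smul_one_eq_diagonal, smul_mulVec, one_mulVec, sub_eq_zero,
    eq_comm] at hMv

theorem exists_mulVec_eq_smul_of_mul_eq_mul {R : Type*} [CommRing R] [DecidableEq κ]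
    {M : Matrix ι ι R} {N : Matrix κ κ R} {E : Matrix ι κ R} {F : Matrix κ ι R}
    (hFE : F * E = 1) (hME : M * E = E * N) {t : R} {w : κ → R} (hw : w ≠ 0)
    (hNw : N *ᵥ w = t • w) : ∃ v ≠ 0, M *ᵥ v = t • v := by
  refine ⟨E *ᵥ w, fun h => hw ?_, ?_⟩
  · rw [← one_mulVec w, ← hFE, ← mulVec_mulVec, h, mulVec_zero]
  · rw [mulVec_mulVec, hME, ← mulVec_mulVec, hNw, mulVec_smul]

theorem det_fin_four {R : Type*} [CommRing R] (A : Matrix (Fin 4) (Fin 4) R) :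
    A.det =
      A 0 0 * (A 1 1 * (A 2 2 * A 3 3 - A 2 3 * A 3 2) - A 1 2 * (A 2 1 * A 3 3 - A 2 3 * A 3 1)
        + A 1 3 * (A 2 1 * A 3 2 - A 2 2 * A 3 1))
      - A 0 1 * (A 1 0 * (A 2 2 * A 3 3 - A 2 3 * A 3 2) - A 1 2 * (A 2 0 * A 3 3 - A 2 3 * A 3 0)
        + A 1 3 * (A 2 0 * A 3 2 - A 2 2 * A 3 0))
      + A 0 2 * (A 1 0 * (A 2 1 * A 3 3 - A 2 3 * A 3 1) - A 1 1 * (A 2 0 * A 3 3 - A 2 3 * A 3 0)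
        + A 1 3 * (A 2 0 * A 3 1 - A 2 1 * A 3 0))
      - A 0 3 * (A 1 0 * (A 2 1 * A 3 2 - A 2 2 * A 3 1) - A 1 1 * (A 2 0 * A 3 2 - A 2 2 * A 3 0)
        + A 1 2 * (A 2 0 * A 3 1 - A 2 1 * A 3 0)) := by
  rw [det_succ_row_zero]
  simp [Fin.sum_univ_succ, det_fin_three, Fin.succAbove, Fin.castSucc, Fin.castAdd, Fin.castLE]
  ring

end Matrix

theorem isEig_of_mulVec_eq_smul {d : Type*} [Fintype d] {M : Matrix d d ℝ} {t : ℝ} {v : d → ℝ}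
    (hv : v ≠ 0) (hMv : M *ᵥ v = t • v) : IsEig M t := by
  refine ⟨Complex.ofRealHom ∘ v, fun h => hv (funext fun i => by simpa using congrFun h i), ?_⟩
  ext i
  change (M.map Complex.ofRealHom *ᵥ _) i = _
  rw [← RingHom.map_mulVec, hMv]
  simp

section Reduction

variable {m k : ℕ}

def embedState (n : ℕ) (P : Matrix (Fin m) (Fin k) ℝ) :
    Matrix ((Fin n ⊕ Fin m) ⊕ (Fin n ⊕ Fin m)) ((Fin n ⊕ Fin k) ⊕ (Fin n ⊕ Fin k)) ℝ :=
  fromBlocks (fromBlocks 1 0 0 P) 0 0 (fromBlocks 1 0 0 P)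

variable {n : ℕ}

theorem embedState_mul_embedState {l : ℕ} (Q : Matrix (Fin k) (Fin m) ℝ)
    (P : Matrix (Fin m) (Fin l) ℝ) :
    embedState n Q * embedState n P = embedState n (Q * P) := by
  simp [embedState, fromBlocks_multiply]

theorem embedState_one : embedState n (1 : Matrix (Fin m) (Fin m) ℝ) = 1 := by
  simp [embedState, fromBlocks_one]

theorem MNM_mul_embedState (η β₁ β₂ : ℝ) {A' A : Matrix (Fin n) (Fin m) ℝ}
    {B' B : Matrix (Fin n) (Fin k) ℝ} {P : Matrix (Fin m) (Fin k) ℝ}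
    (hA : A * P = B) (hA' : A'ᵀ = P * B'ᵀ) :
    MNM η β₁ β₂ A' A * embedState n P = embedState n P * MNM η β₁ β₂ B' B := by
  simp [MNM, embedState, fromBlocks_multiply, hA', Matrix.mul_assoc, hA, Matrix.sub_mul,
    Matrix.mul_sub]

end Reduction

noncomputable def finFourEquivSumSum : Fin 4 ≃ (Fin 1 ⊕ Fin 1) ⊕ (Fin 1 ⊕ Fin 1) :=
  Equiv.ofBijective ![.inl (.inl 0), .inl (.inr 0), .inr (.inl 0), .inr (.inr 0)] (by decide)

theorem MNM_submatrix_finFourEquivSumSum (η β₁ β₂ a' a : ℝ) :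
    (MNM η β₁ β₂ !![a'] !![a]).submatrix finFourEquivSumSum finFourEquivSumSum =
      !![1 + β₁, -(η * a), -β₁, 0;
        η * (1 + β₁) * a', 1 + β₂ - η ^ 2 * (a' * a), -(η * β₁) * a', -β₂;
        1, 0, 0, 0;
        0, 1, 0, 0] := by
  ext i j
  fin_cases i <;> fin_cases j <;> simp [finFourEquivSumSum, MNM, Matrix.mul_apply]

theorem det_one_sub_MNM_mul_MNM (η β₁ β₂ : ℝ) :
    (1 - MNM η β₁ β₂ !![1] !![-2] * MNM η β₁ β₂ !![-1] !![2]).det = -4 * η ^ 4 := by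
  rw [← det_submatrix_equiv_self finFourEquivSumSum, submatrix_sub, Pi.sub_apply, Pi.sub_apply,
    submatrix_one_equiv, ← submatrix_mul_equiv _ _ _ finFourEquivSumSum,
    MNM_submatrix_finFourEquivSumSum, MNM_submatrix_finFourEquivSumSum, det_fin_four]
  simp [one_apply]
  ring

theorem MNM_A1_A2_mul_MNM_A2_A1_mul_embedState (η β₁ β₂ : ℝ) :
    MNM η β₁ β₂ A1 A2 * MNM η β₁ β₂ A2 A1 * embedState 1 !![(1 : ℝ); -1] =
      embedState 1 !![(1 : ℝ); -1] * (MNM η β₁ β₂ !![1] !![-2] * MNM η β₁ β₂ !![-1] !![2]) := by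
  have h₁ : A1 * !![(1 : ℝ); -1] = !![(2 : ℝ)] := by norm_num [A1]
  have h₂ : A2 * !![(1 : ℝ); -1] = !![(-2 : ℝ)] := by norm_num [A2]
  have h₁' : A1ᵀ = !![(1 : ℝ); -1] * !![(1 : ℝ)]ᵀ := by
    ext i j; fin_cases i <;> fin_cases j <;> simp [A1, vecMul, dotProduct]
  have h₂' : A2ᵀ = !![(1 : ℝ); -1] * !![(-1 : ℝ)]ᵀ := by
    ext i j; fin_cases i <;> fin_cases j <;> simp [A2, vecMul, dotProduct]
  rw [Matrix.mul_assoc, MNM_mul_embedState η β₁ β₂ h₁ h₂', ← Matrix.mul_assoc,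
    MNM_mul_embedState η β₁ β₂ h₂ h₁', Matrix.mul_assoc]

theorem stmt14_general (η β₁ β₂ : ℝ) (hη : 0 < η) :
    ∃ μ : ℂ, IsEig (MNM η β₁ β₂ A1 A2 * MNM η β₁ β₂ A2 A1) μ ∧ 1 < ‖μ‖ := by
  have hdet : (1 - MNM η β₁ β₂ !![1] !![-2] * MNM η β₁ β₂ !![-1] !![2]).det < 0 := by
    rw [det_one_sub_MNM_mul_MNM]
    have : 0 < η ^ 4 := by positivity
    linarith
  obtain ⟨t, ht, w, hw, hNw⟩ := exists_mulVec_eq_smul_gt_one_of_det_one_sub_neg hdet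
  have hleft : embedState 1 !![(1 : ℝ), 0] * embedState 1 !![1; -1] = 1 := by
    rw [embedState_mul_embedState, ← embedState_one]
    congr 1
    ext i j
    fin_cases i; fin_cases j; norm_num
  obtain ⟨v, hv, hMv⟩ := exists_mulVec_eq_smul_of_mul_eq_mul hleft
    (MNM_A1_A2_mul_MNM_A2_A1_mul_embedState η β₁ β₂) hw hNw
  refine ⟨t, isEig_of_mulVec_eq_smul hv hMv, ?_⟩
  rwa [Complex.norm_real, Real.norm_of_nonneg (by linarith)]

/-- For every step size `η > 0` and momentum parameters `β₁ ≤ 0`, `β₂ ≤ 0`, the one-period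
product `M_NM(A₁, A₂)·M_NM(A₂, A₁)` of the negative-momentum iterative matrices for the
period-2 game `A₁ = [1,−1]`, `A₂ = [−1,1]` has spectral radius strictly greater than `1`,
i.e. it has a complex eigenvalue of modulus `> 1`. -/
theorem stmt14 (η β₁ β₂ : ℝ) (hη : 0 < η) (hβ₁ : β₁ ≤ 0) (hβ₂ : β₂ ≤ 0) :
    ∃ μ : ℂ, IsEig (MNM η β₁ β₂ A1 A2 * MNM η β₁ β₂ A2 A1) μ ∧ 1 < ‖μ‖ :=
  stmt14_general η β₁ β₂ hη
end
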